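/- If G is a bipartite graph with Laplacian eigenvalues μ₁,...,μₙ, then the Laplacian eigenvalues of the k-th iterated extended double cover G^{k*} are μᵢ + 2r with multiplicity C(k, r), for each i = 1,...,n and r = 0,1,...,k. -/

import Mathlib

open Matrix Polynomial BigOperators
open scoped Classical

/-- The extended double cover `G*` of a graph `G`: a bipartite graph on two copies of
the vertex set, where `xᵢ` is adjacent to `yⱼ` iff `i = j` or `vᵢ ∼ vⱼ` in `G`. -/
def edc {V : Type*} (G : SimpleGraph V) : SimpleGraph (V ⊕ V) where
  Adj u v := match u, v with
    | Sum.inl i, Sum.inr j => i = j ∨ G.Adj i j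
    | Sum.inr i, Sum.inl j => i = j ∨ G.Adj i j
    | _, _ => False
  symm := ⟨by rintro (i|i) (j|j) h <;> simp_all <;> exact h.imp Eq.symm fun hh => G.symm.symm _ _ hh⟩
  loopless := ⟨by rintro (i|i) h <;> simp_all⟩

/-- The vertex type of the k-th iterated extended double cover. -/
def iterV (V : Type*) : ℕ → Type _
  | 0 => V
  | k + 1 => iterV V k ⊕ iterV V k

def iterVFintype (V : Type*) [Fintype V] : ∀ k, Fintype (iterV V k)
  | 0 => ‹Fintype V›
  | k + 1 => @instFintypeSum _ _ (iterVFintype V k) (iterVFintype V k)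

def iterVDecEq (V : Type*) [DecidableEq V] : ∀ k, DecidableEq (iterV V k)
  | 0 => ‹DecidableEq V›
  | k + 1 => @instDecidableEqSum _ _ (iterVDecEq V k) (iterVDecEq V k)

instance {V : Type*} [Fintype V] {k : ℕ} : Fintype (iterV V k) := iterVFintype V k
instance {V : Type*} [DecidableEq V] {k : ℕ} : DecidableEq (iterV V k) := iterVDecEq V k

/-- The k-th iterated extended double cover `G^{k*}`. -/
def edcIter {V : Type*} (G : SimpleGraph V) : (k : ℕ) → SimpleGraph (iterV V k)
  | 0 => G
  | k + 1 => edc (edcIter G k)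

/-- The Laplacian matrix `L = D − A` of a graph. -/
noncomputable def lap {V : Type*} [Fintype V] [DecidableEq V] (G : SimpleGraph V) :
    Matrix V V ℝ :=
  Matrix.diagonal (fun i => (G.degree i : ℝ)) - G.adjMatrix ℝ

/-!
The Laplacian of `G*` is the block matrix `[[D + I, -(A + I)], [-(A + I), D + I]]`, whose
characteristic polynomial factors as `χ(D - A) · χ(D + A + 2I)`. For bipartite `G` the signless
Laplacian `D + A` is conjugate to `D - A` by the diagonal matrix of signs of a 2-colouring, so
`χ_{G*}(x) = χ_G(x) χ_G(x - 2)`. As `G*` is again bipartite, iterating and Pascal's rule give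
`χ_{G^{k*}}(x) = ∏_r χ_G(x - 2r)^{C(k,r)}`.
-/

namespace Matrix

variable {m R : Type*} [Fintype m] [DecidableEq m] [CommRing R]

theorem det_fromBlocks_self (P Q : Matrix m m R) :
    (fromBlocks P Q Q P).det = (P + Q).det * (P - Q).det := by
  have h : fromBlocks 1 1 0 1 * fromBlocks P Q Q P * fromBlocks 1 (-1) 0 1 =
      fromBlocks (P + Q) 0 Q (P - Q) := by
    simp only [fromBlocks_multiply, Matrix.one_mul, Matrix.mul_one, Matrix.zero_mul,
      Matrix.mul_zero, Matrix.mul_neg, add_zero, zero_add]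
    congr 1 <;> abel
  simpa [det_fromBlocks_zero₂₁, det_fromBlocks_zero₁₂] using congrArg det h

theorem charpoly_fromBlocks_self (M N : Matrix m m R) :
    (fromBlocks M N N M).charpoly = (M + N).charpoly * (M - N).charpoly := by
  rw [charpoly, charmatrix_fromBlocks, det_fromBlocks_self]
  simp only [charpoly, charmatrix, map_add, map_sub, RingHom.mapMatrix_apply]
  congr 2 <;> abel

theorem charpoly_conj_of_mul_self_eq_one {S : Matrix m m R} (hS : S * S = 1) (M : Matrix m m R) :
    (S * M * S).charpoly = M.charpoly := by
  rw [Matrix.mul_assoc, charpoly_mul_comm, Matrix.mul_assoc, hS, Matrix.mul_one]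

end Matrix

theorem Finset.prod_range_pow_choose_succ {M : Type*} [CommMonoid M] (g : ℕ → M) (k : ℕ) :
    ∏ r ∈ Finset.range (k + 2), g r ^ (k + 1).choose r =
      (∏ r ∈ Finset.range (k + 1), g r ^ k.choose r) *
        ∏ r ∈ Finset.range (k + 1), g (r + 1) ^ k.choose r := by
  have hextend : ∏ r ∈ Finset.range (k + 1), g r ^ k.choose r =
      ∏ r ∈ Finset.range (k + 2), g r ^ k.choose r := by
    rw [Finset.prod_range_succ _ (k + 1), Nat.choose_succ_self, pow_zero, mul_one]
  rw [hextend, Finset.prod_range_succ' _ (k + 1), Finset.prod_range_succ' _ (k + 1)]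
  simp only [Nat.choose_succ_succ', pow_add, Finset.prod_mul_distrib, Nat.choose_zero_right]
  ac_rfl

section ExtendedDoubleCover

variable {V : Type*} (G : SimpleGraph V)

@[simp] theorem edc_adj_inl_inl (i j : V) : ¬(edc G).Adj (.inl i) (.inl j) := id
@[simp] theorem edc_adj_inr_inr (i j : V) : ¬(edc G).Adj (.inr i) (.inr j) := id
@[simp] theorem edc_adj_inl_inr (i j : V) : (edc G).Adj (.inl i) (.inr j) ↔ i = j ∨ G.Adj i j :=
  Iff.rfl
@[simp] theorem edc_adj_inr_inl (i j : V) : (edc G).Adj (.inr i) (.inl j) ↔ i = j ∨ G.Adj i j :=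
  Iff.rfl

theorem edc_colorable_two : (edc G).Colorable 2 :=
  ⟨.mk (Sum.elim (fun _ => 0) (fun _ => 1)) (by rintro (i|i) (j|j) h <;> simp_all)⟩

theorem edcIter_colorable_two (hbip : G.Colorable 2) : ∀ k, (edcIter G k).Colorable 2
  | 0 => hbip
  | k + 1 => edc_colorable_two (edcIter G k)

variable [Fintype V] [DecidableEq V]

theorem edc_neighborFinset_inl (i : V) :
    (edc G).neighborFinset (.inl i) = (insert i (G.neighborFinset i)).map .inr := by
  ext (j|j) <;> simp [eq_comm]

theorem edc_neighborFinset_inr (i : V) :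
    (edc G).neighborFinset (.inr i) = (insert i (G.neighborFinset i)).map .inl := by
  ext (j|j) <;> simp [eq_comm]

theorem edc_degree_inl (i : V) : (edc G).degree (.inl i) = G.degree i + 1 := by
  rw [← SimpleGraph.card_neighborFinset_eq_degree, edc_neighborFinset_inl, Finset.card_map,
    Finset.card_insert_of_notMem (G.notMem_neighborFinset_self i),
    SimpleGraph.card_neighborFinset_eq_degree]

theorem edc_degree_inr (i : V) : (edc G).degree (.inr i) = G.degree i + 1 := by
  rw [← SimpleGraph.card_neighborFinset_eq_degree, edc_neighborFinset_inr, Finset.card_map,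
    Finset.card_insert_of_notMem (G.notMem_neighborFinset_self i),
    SimpleGraph.card_neighborFinset_eq_degree]

noncomputable def signlessLap : Matrix V V ℝ :=
  diagonal (fun i => (G.degree i : ℝ)) + G.adjMatrix ℝ

theorem lap_edc : lap (edc G) =
    fromBlocks (diagonal (fun i => (G.degree i : ℝ)) + 1) (-(G.adjMatrix ℝ + 1))
      (-(G.adjMatrix ℝ + 1)) (diagonal (fun i => (G.degree i : ℝ)) + 1) := by
  ext (i|i) (j|j) <;> by_cases h : i = j <;>
    simp [lap, one_apply, h, edc_degree_inl, edc_degree_inr, SimpleGraph.adjMatrix_apply]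

theorem charpoly_lap_edc :
    (lap (edc G)).charpoly = (lap G).charpoly * (signlessLap G).charpoly.comp (X - C 2) := by
  have hsignless : diagonal (fun i => (G.degree i : ℝ)) + 1 - -(G.adjMatrix ℝ + 1) =
      signlessLap G - scalar V (-2) := by
    rw [signlessLap, scalar_apply, ← smul_one_eq_diagonal, neg_smul, two_smul]
    abel
  rw [lap_edc, charpoly_fromBlocks_self, hsignless, charpoly_sub_scalar, C_neg, ← sub_eq_add_neg]
  congr 2
  rw [lap]
  abel

/-- Conjugating by the diagonal matrix of the colour signs `±1` negates the adjacency part. -/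
theorem charpoly_signlessLap_of_colorable_two (hbip : G.Colorable 2) :
    (signlessLap G).charpoly = (lap G).charpoly := by
  obtain ⟨c⟩ := hbip
  set s : V → ℝ := fun i => if c i = 0 then 1 else -1
  have hss : ∀ i, s i * s i = 1 := fun i => by by_cases h : c i = 0 <;> simp [s, h]
  have hadj : ∀ {i j}, G.Adj i j → s i * s j = -1 := fun {i j} h => by
    have := c.valid h
    by_cases hi : c i = 0 <;> by_cases hj : c j = 0 <;> simp [s, hi, hj] <;> omega
  have hconj : diagonal s * lap G * diagonal s = signlessLap G := by
    ext i j
    rw [mul_diagonal, diagonal_mul]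
    by_cases hij : i = j
    · subst hij
      simp [lap, signlessLap, mul_right_comm _ _ (s i), hss]
    · by_cases h : G.Adj i j <;>
        simp [lap, signlessLap, hij, h, hadj]
  rw [← hconj, charpoly_conj_of_mul_self_eq_one (by simp [diagonal_mul_diagonal, hss])]

theorem charpoly_lap_edc_of_colorable_two (hbip : G.Colorable 2) :
    (lap (edc G)).charpoly = (lap G).charpoly * (lap G).charpoly.comp (X - C 2) := by
  rw [charpoly_lap_edc, charpoly_signlessLap_of_colorable_two G hbip]

theorem charpoly_lap_edcIter (hbip : G.Colorable 2) (k : ℕ) :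
    (lap (edcIter G k)).charpoly =
      ∏ r ∈ Finset.range (k + 1), ((lap G).charpoly.comp (X - C (2 * (r : ℝ)))) ^ k.choose r := by
  induction k with
  | zero =>
    simp only [zero_add, Finset.prod_range_one, Nat.choose_self, pow_one, Nat.cast_zero,
      mul_zero, map_zero, sub_zero, comp_X]
    rfl
  | succ k ih =>
    have hshift (r : ℕ) :
        (X - C (2 * (r : ℝ))).comp (X - C 2) = X - C (2 * ((r + 1 : ℕ) : ℝ)) := by
      simp only [sub_comp, X_comp, C_comp, Nat.cast_succ, mul_add_one, C_add]
      ring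
    -- `iterV V (k + 1)` and its instances unfold to the `Sum` ones only up to defeq, so no `rw`
    refine (charpoly_lap_edc_of_colorable_two _ (edcIter_colorable_two G hbip k)).trans ?_
    rw [ih, prod_comp, Finset.prod_range_pow_choose_succ]
    simp only [pow_comp, comp_assoc, hshift]

end ExtendedDoubleCover

/-- If `G` is a bipartite graph with Laplacian eigenvalues `μ₁,…,μₙ`,
then the Laplacian eigenvalues of the k-th iterated extended double cover `G^{k*}`
are `μᵢ + 2r` with multiplicity `C(k, r)`, for `i = 1,…,n` and `r = 0,1,…,k`. -/
theorem stmt10 {n : ℕ} (G : SimpleGraph (Fin n)) (hbip : G.Colorable 2)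
    (μ : Fin n → ℝ) (hspec : (lap G).charpoly = ∏ i, (X - C (μ i))) (k : ℕ) :
    (lap (edcIter G k)).charpoly =
      ∏ i, ∏ r ∈ Finset.range (k + 1), (X - C (μ i + 2 * r)) ^ k.choose r := by
  have hshift (c : ℝ) : (lap G).charpoly.comp (X - C c) = ∏ i, (X - C (μ i + c)) := by
    simp only [hspec, prod_comp, sub_comp, X_comp, C_comp, C_add, sub_sub, add_comm]
  rw [charpoly_lap_edcIter G hbip k, Finset.prod_comm]
  simp only [hshift, Finset.prod_pow]
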